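/- Let d and t be positive integers, let x_1,…,x_n be unit vectors in ℂ^d, and let w_1,…,w_n be positive real weights with ∑_{i=1}^n w_i = 1. Then ∑_{i=1}^n ∑_{j=1}^n w_i w_j |⟨x_i, x_j⟩|^{2t} ≥ 1/C(d+t−1, t), where C(d+t−1,t) is the binomial coefficient and ⟨·,·⟩ is the standard Hermitian inner product on ℂ^d. (Generalized Welch bound.) -/

import Mathlib

/-!
The degree-`t` Veronese map `φ`, with coordinates scaled by square roots of multinomial
coefficients, satisfies `⟪φ x, φ y⟫ = ⟪x, y⟫ ^ t`, so it sends the `x i` to unit vectors in a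
space of dimension `N = C(d+t-1, t)`. For the frame operator `S = ∑ i, w i • |φ xᵢ⟩⟨φ xᵢ|`
one has `tr S = 1` while `‖S‖²_F` is the double sum, and Cauchy–Schwarz on the diagonal gives
`1 = (tr S)² ≤ N ‖S‖²_F`.
-/

open Finset RCLike
open scoped InnerProductSpace

section FramePotential

variable {𝕜 E ι κ : Type*} [RCLike 𝕜] [NormedAddCommGroup E] [InnerProductSpace 𝕜 E]
  [Fintype ι] [Fintype κ]

/-- The matrix of the frame operator `y ↦ ∑ i, w i • ⟪v i, y⟫ • v i` in the basis `b`. -/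
noncomputable def frameMatrix (b : OrthonormalBasis κ 𝕜 E) (v : ι → E) (w : ι → ℝ) :
    Matrix κ κ 𝕜 :=
  Matrix.of fun a c => ∑ i, (w i : 𝕜) * ⟪b a, v i⟫_𝕜 * ⟪v i, b c⟫_𝕜

theorem Matrix.sq_re_trace_le_card_mul (M : Matrix κ κ 𝕜) :
    re M.trace ^ 2 ≤ Fintype.card κ * ∑ a, ∑ c, ‖M a c‖ ^ 2 :=
  calc re M.trace ^ 2 = (∑ a, re (M a a)) ^ 2 := by rw [Matrix.trace, map_sum]; rfl
    _ ≤ Fintype.card κ * ∑ a, re (M a a) ^ 2 := sq_sum_le_card_mul_sum_sq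
    _ ≤ Fintype.card κ * ∑ a, ‖M a a‖ ^ 2 := by
      gcongr _ * ∑ a, ?_ with a
      exact sq_le_sq.mpr ((abs_re_le_norm (M a a)).trans_eq (abs_norm _).symm)
    _ ≤ Fintype.card κ * ∑ a, ∑ c, ‖M a c‖ ^ 2 := by
      gcongr with a
      exact single_le_sum (f := fun c => ‖M a c‖ ^ 2) (fun _ _ => by positivity) (mem_univ a)

theorem re_trace_frameMatrix (b : OrthonormalBasis κ 𝕜 E) (v : ι → E) (w : ι → ℝ) :
    re (frameMatrix b v w).trace = ∑ i, w i * ‖v i‖ ^ 2 := by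
  have h : ∀ a, re (frameMatrix b v w a a) = ∑ i, w i * ‖⟪b a, v i⟫_𝕜‖ ^ 2 := fun a => by
    simp only [frameMatrix, Matrix.of_apply, map_sum, mul_assoc, re_ofReal_mul]
    refine sum_congr rfl fun i _ => ?_
    rw [← inner_conj_symm (v i) (b a), RCLike.mul_conj, ← ofReal_pow, ofReal_re]
  simp only [Matrix.trace, Matrix.diag, map_sum, h]
  rw [sum_comm]
  simp only [← mul_sum, b.sum_sq_norm_inner_right]

theorem sum_sum_norm_sq_frameMatrix (b : OrthonormalBasis κ 𝕜 E) (v : ι → E) (w : ι → ℝ) :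
    ∑ a, ∑ c, ‖frameMatrix b v w a c‖ ^ 2 = ∑ i, ∑ j, w i * w j * ‖⟪v i, v j⟫_𝕜‖ ^ 2 := by
  apply ofReal_injective (K := 𝕜)
  have h : ∀ a c, (‖frameMatrix b v w a c‖ ^ 2 : 𝕜) = ∑ i, ∑ j, (w i : 𝕜) * w j *
      ((⟪v j, b a⟫_𝕜 * ⟪b a, v i⟫_𝕜) * (⟪v i, b c⟫_𝕜 * ⟪b c, v j⟫_𝕜)) := fun a c => by
    rw [← RCLike.mul_conj, frameMatrix, Matrix.of_apply, map_sum, sum_mul_sum]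
    refine sum_congr rfl fun i _ => sum_congr rfl fun j _ => ?_
    simp only [map_mul, conj_ofReal, inner_conj_symm]
    ring
  have swap : ∀ f : κ → κ → ι → ι → 𝕜,
      ∑ a, ∑ c, ∑ i, ∑ j, f a c i j = ∑ i, ∑ j, ∑ a, ∑ c, f a c i j := fun f => by
    simp only [sum_comm (s := (univ : Finset κ)) (t := (univ : Finset ι))]
  push_cast
  simp only [h]
  rw [swap]
  refine sum_congr rfl fun i _ => sum_congr rfl fun j _ => ?_
  simp only [← mul_sum, ← sum_mul, b.sum_inner_mul_inner]
  rw [← inner_conj_symm (v j) (v i), RCLike.conj_mul]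

theorem sq_sum_mul_norm_sq_le_finrank_mul [FiniteDimensional 𝕜 E] (v : ι → E) (w : ι → ℝ) :
    (∑ i, w i * ‖v i‖ ^ 2) ^ 2 ≤
      Module.finrank 𝕜 E * ∑ i, ∑ j, w i * w j * ‖⟪v i, v j⟫_𝕜‖ ^ 2 := by
  have h := (frameMatrix (stdOrthonormalBasis 𝕜 E) v w).sq_re_trace_le_card_mul
  rwa [re_trace_frameMatrix, sum_sum_norm_sq_frameMatrix, Fintype.card_fin] at h

end FramePotential

section Veronese

variable {𝕜 ι : Type*} [RCLike 𝕜] [Fintype ι] [DecidableEq ι]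

noncomputable def veronese (t : ℕ) (x : EuclideanSpace 𝕜 ι) : EuclideanSpace 𝕜 (Sym ι t) :=
  WithLp.toLp 2 fun s => (√(s.val.countPerms : ℝ) : 𝕜) * (s.val.map x).prod

theorem inner_veronese (t : ℕ) (x y : EuclideanSpace 𝕜 ι) :
    ⟪veronese t x, veronese t y⟫_𝕜 = ⟪x, y⟫_𝕜 ^ t := by
  simp only [PiLp.inner_apply, RCLike.inner_apply, sum_pow, sym_univ]
  refine sum_congr rfl fun s _ => ?_
  simp only [veronese, map_mul, conj_ofReal, map_multiset_prod, Multiset.map_map,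
    Multiset.prod_map_mul]
  rw [mul_mul_mul_comm, ← ofReal_mul, Real.mul_self_sqrt (Nat.cast_nonneg _), ofReal_natCast]
  rfl

theorem norm_veronese (t : ℕ) (x : EuclideanSpace 𝕜 ι) : ‖veronese t x‖ = ‖x‖ ^ t := by
  have h : ((‖veronese t x‖ ^ 2 : ℝ) : 𝕜) = ((‖x‖ ^ t) ^ 2 : ℝ) := by
    push_cast
    rw [← inner_self_eq_norm_sq_to_K, inner_veronese, inner_self_eq_norm_sq_to_K, ← pow_mul,
      ← pow_mul, mul_comm]
  exact (pow_left_inj₀ (norm_nonneg _) (by positivity) two_ne_zero).mp (ofReal_injective h)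

end Veronese

theorem welch_bound (d t n : ℕ)
    (x : Fin n → EuclideanSpace ℂ (Fin d)) (hx : ∀ i, ‖x i‖ = 1)
    (w : Fin n → ℝ) (hsum : ∑ i, w i = 1) :
    ((d + t - 1).choose t : ℝ)⁻¹ ≤
      ∑ i, ∑ j, w i * w j * ‖(inner ℂ (x i) (x j) : ℂ)‖ ^ (2 * t) := by
  have h := sq_sum_mul_norm_sq_le_finrank_mul (𝕜 := ℂ) (fun i => veronese t (x i)) w
  simp only [norm_veronese, hx, one_pow, mul_one, hsum, inner_veronese, norm_pow, ← pow_mul,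
    finrank_euclideanSpace, Sym.card_sym_eq_choose, Fintype.card_fin] at h
  have hN := (Nat.cast_nonneg _).lt_of_ne' (left_ne_zero_of_mul (one_pos.trans_le h).ne')
  rw [mul_comm 2 t, inv_le_iff_one_le_mul₀' hN]
  exact h
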